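/- arXiv:1505.07485 — 2 statements merged into one kernel-verified Lean document; each statement's English description precedes it below -/
import Mathlib

section
/- Fix n, and let W = ∪_{j=a}^{b} R_j be an interval of rows of the diamond D_n where a ≤ b and a is odd. Let H be a set of odd vertices of W such that each column contains at most one vertex of H. Suppose that either (i) b is odd, or (ii) b is even and for each integer t, the top t odd rows of W contain at most t vertices of H. Then there exists a matching of W that matches all even vertices of W but leaves every vertex of H unmatched. -/
/-- The nearest-neighbour grid graph on `ℤ²`. -/
def gridGraph : SimpleGraph (ℤ × ℤ) where
  Adj u v := |u.1 - v.1| + |u.2 - v.2| = 1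
  symm := by
    constructor
    intro u v h
    simpa [abs_sub_comm] using h
  loopless := by
    constructor
    intro u h
    simp at h

/-- The diamond `D_n = {u ∈ ℤ² : ‖u‖₁ < 2n}`. -/
def diamond (n : ℕ) : Set (ℤ × ℤ) :=
  {u | |u.1| + |u.2| < 2 * n}

/-!
Write `col u = u.1 + u.2` and `row u = u.2 - u.1`. Matching every even vertex `u` of `W` with
its neighbour `(u.1 + 1, u.2)` (one column right, one row down) matches all even vertices into
odd vertices of `W`, because `a` is odd; it uses a hole `h ∈ H` only as the partner of the even
vertex just up-left of `h`. Each hole is freed along an alternating path with an odd exit row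
`ℓ h ≥ row h`: the even vertices of column `col h - 1` above `h` up to row `ℓ h` take their
upper neighbour `(u.1, u.2 + 1)` instead (`OnRiser`), and the even vertices of row `ℓ h + 1`
left of `h` take their lower neighbour `(u.1, u.2 - 1)` (`OnExitRow`). This is a matching as
long as exit rows of distinct holes differ (unless the row above them is empty) and no path
crosses another.

If `b` is odd, every path exits at the top row `b`. If `b` is even, the hypothesis on the top
odd rows is Hall's condition for scheduling the holes on distinct odd exit rows below `b`, and
among such schedules one maximising `∑ col h * ℓ h` has no crossing, since exchanging the exit
rows of two crossing paths increases the sum.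
-/

theorem mem_diamond_iff {n : ℕ} {u : ℤ × ℤ} :
    u ∈ diamond n ↔ (u.1.natAbs : ℤ) + u.2.natAbs < 2 * n := by
  simp only [diamond, Set.mem_ofPred_eq, Int.abs_eq_natAbs]

theorem gridGraph_adj_iff {u v : ℤ × ℤ} :
    gridGraph.Adj u v ↔ ((u.1 - v.1).natAbs : ℤ) + (u.2 - v.2).natAbs = 1 := by
  simp only [gridGraph, Int.abs_eq_natAbs]

theorem diamond_finite (n : ℕ) : (diamond n).Finite :=
  (Set.finite_Icc (-(2 * (n : ℤ)), -(2 * (n : ℤ))) (2 * (n : ℤ), 2 * (n : ℤ))).subset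
    fun u hu => by
      rw [mem_diamond_iff] at hu
      simp only [Set.mem_Icc, Prod.le_def]
      omega

-- `‖u‖₁ ≡ u.1 + u.2 (mod 2)`, so an even vertex of `D_n` has `‖u‖₁ ≤ 2n - 2`.
theorem mem_diamond_of_adj_of_even {n : ℕ} {u v : ℤ × ℤ} (hu : u ∈ diamond n)
    (heven : Even (u.1 + u.2)) (huv : gridGraph.Adj u v) : v ∈ diamond n := by
  rw [mem_diamond_iff] at hu ⊢
  rw [gridGraph_adj_iff] at huv
  rw [Int.even_iff] at heven
  omega

def rowStrip (n : ℕ) (a b : ℤ) : Set (ℤ × ℤ) :=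
  {u ∈ diamond n | a ≤ u.2 - u.1 ∧ u.2 - u.1 ≤ b}

section Scheduling

open Finset

theorem exists_injOn_le_of_card_filter_lt_le {ι : Type*} (S : Finset ι) (d : ι → ℕ)
    (hall : ∀ t : ℕ, #{i ∈ S | d i < t} ≤ t) :
    ∃ k : ι → ℕ, Set.InjOn k S ∧ ∀ i ∈ S, k i ≤ d i := by
  classical
  obtain ⟨f, hf, hfd⟩ := (all_card_le_biUnion_card_iff_exists_injective
    (fun i : S => range (d i + 1))).mp fun s => by
      obtain rfl | hs := s.eq_empty_or_nonempty
      · simp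
      obtain ⟨m, hm, hmax⟩ := s.exists_max_image (fun i => d i) hs
      calc #s = #(s.map (Function.Embedding.subtype _)) := (card_map _).symm
        _ ≤ #{i ∈ S | d i < d m + 1} := card_le_card fun i hi => by
            obtain ⟨j, hj, rfl⟩ := mem_map.mp hi
            exact mem_filter.mpr ⟨j.2, Nat.lt_succ_of_le (hmax j hj)⟩
        _ ≤ #(range (d m + 1)) := by rw [card_range]; exact hall _
        _ ≤ #(s.biUnion _) :=
            card_le_card (subset_biUnion_of_mem (fun i : S => range (d i + 1)) hm)
  refine ⟨fun i => if hi : i ∈ S then f ⟨i, hi⟩ else 0, fun i hi j hj hij => ?_, fun i hi => ?_⟩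
  · simp only [mem_coe] at hi hj
    simp only [dif_pos hi, dif_pos hj] at hij
    exact congrArg Subtype.val (hf hij)
  · simpa [dif_pos hi, Nat.lt_succ_iff] using hfd ⟨i, hi⟩

theorem sum_mul_comp_swap {α : Type*} [DecidableEq α] {S : Finset α} {p q : α} (hp : p ∈ S)
    (hq : q ∈ S) (hpq : p ≠ q) (c ℓ : α → ℤ) :
    ∑ i ∈ S, c i * ℓ (Equiv.swap p q i) = ∑ i ∈ S, c i * ℓ i + (c q - c p) * (ℓ p - ℓ q) := by
  rw [← sub_eq_iff_eq_add', ← sum_sub_distrib,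
    sum_eq_add p q hpq (fun i _ hi => by rw [Equiv.swap_apply_of_ne_of_ne hi.1 hi.2, sub_self])
      (absurd hp) (absurd hq), Equiv.swap_apply_left, Equiv.swap_apply_right]
  ring

theorem exists_uncrossed {α : Type*} (S : Finset α) (r c ℓ₀ : α → ℤ) (hinj : Set.InjOn ℓ₀ S)
    (hr : ∀ i ∈ S, r i ≤ ℓ₀ i) :
    ∃ ℓ : α → ℤ, (∀ i ∈ S, r i ≤ ℓ i ∧ ℓ i ∈ ℓ₀ '' S) ∧ Set.InjOn ℓ S ∧
      ∀ p ∈ S, ∀ q ∈ S, c p < c q → r p ≤ ℓ q → ℓ p ≤ ℓ q := by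
  classical
  let Valid (ℓ : α → ℤ) : Prop := (∀ i ∈ S, r i ≤ ℓ i ∧ ℓ i ∈ ℓ₀ '' S) ∧ Set.InjOn ℓ S
  have hbdd (ℓ : α → ℤ) (hℓ : Valid ℓ) :
      ∑ i ∈ S, c i * ℓ i ≤ ∑ i ∈ S, |c i| * ∑ j ∈ S, |ℓ₀ j| := by
    refine sum_le_sum fun i hi => ?_
    obtain ⟨j, hj, hji⟩ := (hℓ.1 i hi).2
    calc c i * ℓ i ≤ |c i| * |ℓ₀ j| := by rw [hji, ← abs_mul]; exact le_abs_self _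
      _ ≤ |c i| * ∑ j ∈ S, |ℓ₀ j| :=
        mul_le_mul_of_nonneg_left (single_le_sum (fun j _ => abs_nonneg (ℓ₀ j)) hj)
          (abs_nonneg _)
  obtain ⟨_, ⟨ℓ, hℓ, rfl⟩, hmax⟩ := Int.exists_greatest_of_bdd
    (P := fun z => ∃ ℓ, Valid ℓ ∧ ∑ i ∈ S, c i * ℓ i = z)
    ⟨_, by rintro _ ⟨ℓ, hℓ, rfl⟩; exact hbdd ℓ hℓ⟩
    ⟨_, ℓ₀, ⟨fun i hi => ⟨hr i hi, i, hi, rfl⟩, hinj⟩, rfl⟩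
  refine ⟨ℓ, hℓ.1, hℓ.2, fun p hp q hq hcpq hrp => ?_⟩
  by_contra! hlt
  have hpq : p ≠ q := by rintro rfl; exact lt_irrefl _ hcpq
  have hmaps : Set.MapsTo (Equiv.swap p q) S S := fun i hi => by
    rw [Equiv.swap_apply_def]; split_ifs <;> assumption
  have hswap : Valid (ℓ ∘ Equiv.swap p q) := by
    refine ⟨fun i hi => ⟨?_, (hℓ.1 _ (hmaps hi)).2⟩,
      hℓ.2.comp (Equiv.swap p q).injective.injOn hmaps⟩
    rw [Function.comp_apply, Equiv.swap_apply_def]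
    split_ifs with hip hiq
    · exact hip ▸ hrp
    · exact hiq ▸ ((hℓ.1 q hq).1.trans hlt.le)
    · exact (hℓ.1 i hi).1
  have hle := hmax _ ⟨_, hswap, rfl⟩
  rw [Function.comp_def, sum_mul_comp_swap hp hq hpq] at hle
  nlinarith [mul_pos (sub_pos.2 hcpq) (sub_pos.2 hlt)]

end Scheduling

section Partner

variable (n : ℕ) (a b : ℤ) (H : Set (ℤ × ℤ)) (ℓ : ℤ × ℤ → ℤ)

structure IsExitRowAssignment : Prop where
  odd : ∀ h ∈ H, Odd (ℓ h)
  row_le : ∀ h ∈ H, h.2 - h.1 ≤ ℓ h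
  le_top : ∀ h ∈ H, ℓ h ≤ b
  eq_of_exitRow_eq : ∀ h ∈ H, ∀ h' ∈ H, ℓ h = ℓ h' →
    (∃ u ∈ rowStrip n a b, u.2 - u.1 = ℓ h + 1) → h = h'
  noncrossing : ∀ p ∈ H, ∀ q ∈ H, p.1 + p.2 < q.1 + q.2 → p.2 - p.1 ≤ ℓ q → ℓ p ≤ ℓ q

def OnExitRow (u : ℤ × ℤ) : Prop :=
  ∃ h ∈ H, u.2 - u.1 = ℓ h + 1 ∧ u.1 + u.2 < h.1 + h.2

def OnRiser (u : ℤ × ℤ) : Prop :=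
  ∃ h ∈ H, u.1 + u.2 + 1 = h.1 + h.2 ∧ h.2 - h.1 < u.2 - u.1 ∧ u.2 - u.1 ≤ ℓ h

open Classical in
noncomputable def partner (u : ℤ × ℤ) : ℤ × ℤ :=
  if OnExitRow H ℓ u then (u.1, u.2 - 1)
  else if OnRiser H ℓ u then (u.1, u.2 + 1)
  else (u.1 + 1, u.2)

theorem partner_cases (u : ℤ × ℤ) :
    (OnExitRow H ℓ u ∧ partner H ℓ u = (u.1, u.2 - 1)) ∨
    (¬ OnExitRow H ℓ u ∧ OnRiser H ℓ u ∧ partner H ℓ u = (u.1, u.2 + 1)) ∨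
    (¬ OnExitRow H ℓ u ∧ ¬ OnRiser H ℓ u ∧ partner H ℓ u = (u.1 + 1, u.2)) := by
  unfold partner
  split_ifs <;> simp_all

variable {n a b H ℓ}

theorem gridGraph_adj_partner (u : ℤ × ℤ) : gridGraph.Adj u (partner H ℓ u) := by
  unfold partner
  split_ifs <;> rw [gridGraph_adj_iff] <;> omega

theorem odd_partner {u : ℤ × ℤ} (hu : Even (u.1 + u.2)) :
    Odd ((partner H ℓ u).1 + (partner H ℓ u).2) := by
  rw [Int.even_iff] at hu
  rw [Int.odd_iff]
  unfold partner
  split_ifs <;> dsimp only <;> omega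

theorem OnExitRow.two_left {u : ℤ × ℤ} (hu : OnExitRow H ℓ u) :
    OnExitRow H ℓ (u.1 - 1, u.2 - 1) := by
  obtain ⟨h, hh, hrow, hcol⟩ := hu
  exact ⟨h, hh, by dsimp only; omega, by dsimp only; omega⟩

variable (hℓ : IsExitRowAssignment n a b H ℓ)
include hℓ

theorem OnRiser.two_up {u : ℤ × ℤ} (hu : OnRiser H ℓ u) (heven : Even (u.1 + u.2)) :
    OnRiser H ℓ (u.1 - 1, u.2 + 1) ∨ OnExitRow H ℓ (u.1 - 1, u.2 + 1) := by
  obtain ⟨h, hh, hcol, hlow, hhigh⟩ := hu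
  have hodd := Int.odd_iff.mp (hℓ.odd h hh)
  rw [Int.even_iff] at heven
  by_cases hrow : u.2 - u.1 + 2 ≤ ℓ h
  · exact .inl ⟨h, hh, by dsimp only; omega, by dsimp only; omega, by dsimp only; omega⟩
  · exact .inr ⟨h, hh, by dsimp only; omega, by dsimp only; omega⟩

theorem OnExitRow.not_onRiser_two_down {u : ℤ × ℤ} (hu : OnExitRow H ℓ u)
    (huW : u ∈ rowStrip n a b) (heven : Even (u.1 + u.2)) : ¬ OnRiser H ℓ (u.1, u.2 - 2) := by
  rintro ⟨q, hq, hcolq, hlowq, hhighq⟩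
  obtain ⟨p, hp, hrowp, hcolp⟩ := hu
  dsimp only at hcolq hlowq hhighq
  rw [Int.even_iff] at heven
  have hoddp := Int.odd_iff.mp (hℓ.odd p hp)
  have hoddq := Int.odd_iff.mp (hℓ.odd q hq)
  have hqp : ℓ q ≤ ℓ p := hℓ.noncrossing q hq p hp (by omega) (by omega)
  have hne : q ≠ p := by rintro rfl; omega
  exact hne (hℓ.eq_of_exitRow_eq q hq p hp (by omega) ⟨u, huW, by omega⟩)

end Partner

section Matching

variable {n : ℕ} {a b : ℤ} {H : Set (ℤ × ℤ)} {ℓ : ℤ × ℤ → ℤ}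
  (hℓ : IsExitRowAssignment n a b H ℓ)
include hℓ

theorem partner_mem_rowStrip (hHW : H ⊆ rowStrip n a b) (ha : Odd a) {u : ℤ × ℤ}
    (huW : u ∈ rowStrip n a b) (heven : Even (u.1 + u.2)) : partner H ℓ u ∈ rowStrip n a b := by
  obtain ⟨hu, hlow, hhigh⟩ := huW
  refine ⟨mem_diamond_of_adj_of_even hu heven (gridGraph_adj_partner u), ?_⟩
  rw [Int.odd_iff] at ha
  rw [Int.even_iff] at heven
  unfold partner
  split_ifs with hexit hriser
  · obtain ⟨h, hh, hrow, -⟩ := hexit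
    have := hℓ.row_le h hh
    have := (hHW hh).2.1
    dsimp only
    omega
  · obtain ⟨h, hh, -, -, hrow⟩ := hriser
    have := Int.odd_iff.mp (hℓ.odd h hh)
    have := hℓ.le_top h hh
    dsimp only
    omega
  · dsimp only
    omega

theorem partner_notMem
    (hcol : ∀ u ∈ H, ∀ v ∈ H, u.1 + u.2 = v.1 + v.2 → u = v) {u : ℤ × ℤ}
    (huW : u ∈ rowStrip n a b) : partner H ℓ u ∉ H := by
  unfold partner
  split_ifs with hexit hriser
  · intro hv
    obtain ⟨h, hh, hrow, hlt⟩ := hexit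
    have hvh : ℓ (u.1, u.2 - 1) ≤ ℓ h := hℓ.noncrossing _ hv h hh (by dsimp only; omega)
      (by dsimp only; omega)
    have := hℓ.row_le _ hv
    have hne : (u.1, u.2 - 1) ≠ h := by rintro rfl; dsimp only at hlt; omega
    exact hne (hℓ.eq_of_exitRow_eq _ hv h hh (by dsimp only at this; omega) ⟨u, huW, by omega⟩)
  · intro hv
    obtain ⟨h, hh, hcolh, hlow, -⟩ := hriser
    have := hcol _ hv h hh (by dsimp only; omega)
    subst this
    dsimp only at hlow
    omega
  · intro hv
    have := hℓ.row_le _ hv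
    dsimp only at this
    by_cases hrow : u.2 - u.1 ≤ ℓ (u.1 + 1, u.2)
    · exact hriser ⟨_, hv, by dsimp only; omega, by dsimp only; omega, hrow⟩
    · exact hexit ⟨_, hv, by omega, by dsimp only; omega⟩

theorem partner_injOn : Set.InjOn (partner H ℓ) {u ∈ rowStrip n a b | Even (u.1 + u.2)} := by
  rintro u ⟨huW, hu⟩ v ⟨hvW, hv⟩ huv
  rcases partner_cases H ℓ u with ⟨hu₁, hpu⟩ | ⟨hu₁, hu₂, hpu⟩ | ⟨hu₁, hu₂, hpu⟩ <;>
    rcases partner_cases H ℓ v with ⟨hv₁, hpv⟩ | ⟨hv₁, hv₂, hpv⟩ | ⟨hv₁, hv₂, hpv⟩ <;>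
    rw [hpu, hpv] at huv <;> obtain ⟨h₁, h₂⟩ := Prod.mk.inj huv
  · exact Prod.ext (by omega) (by omega)
  · obtain rfl : v = (u.1, u.2 - 2) := Prod.ext (by omega) (by omega)
    exact (hu₁.not_onRiser_two_down hℓ huW hu hv₂).elim
  · obtain rfl : v = (u.1 - 1, u.2 - 1) := Prod.ext (by omega) (by omega)
    exact (hv₁ hu₁.two_left).elim
  · obtain rfl : u = (v.1, v.2 - 2) := Prod.ext (by omega) (by omega)
    exact (hv₁.not_onRiser_two_down hℓ hvW hv hu₂).elim
  · exact Prod.ext (by omega) (by omega)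
  · obtain rfl : v = (u.1 - 1, u.2 + 1) := Prod.ext (by omega) (by omega)
    exact ((hu₂.two_up hℓ hu).elim hv₂ hv₁).elim
  · obtain rfl : u = (v.1 - 1, v.2 - 1) := Prod.ext (by omega) (by omega)
    exact (hu₁ hv₁.two_left).elim
  · obtain rfl : u = (v.1 - 1, v.2 + 1) := Prod.ext (by omega) (by omega)
    exact ((hv₂.two_up hℓ hv).elim hu₂ hu₁).elim
  · exact Prod.ext (by omega) (by omega)

end Matching

theorem SimpleGraph.Subgraph.exists_isMatching_of_injOn {V : Type*} {G : SimpleGraph V}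
    {s : Set V} (f : V → V) (hadj : ∀ v ∈ s, G.Adj v (f v)) (hinj : Set.InjOn f s)
    (hdisj : Disjoint s (f '' s)) : ∃ M : G.Subgraph, M.verts = s ∪ f '' s ∧ M.IsMatching :=
  IsMatching.exists_of_disjoint_sets_of_equiv hdisj (Equiv.Set.imageOfInjOn f s hinj)
    fun v => hadj v v.2

theorem exists_matching_of_isExitRowAssignment {n : ℕ} {a b : ℤ} {H : Set (ℤ × ℤ)}
    {ℓ : ℤ × ℤ → ℤ} (hℓ : IsExitRowAssignment n a b H ℓ) (ha : Odd a)
    (hHW : H ⊆ rowStrip n a b) (hHodd : ∀ u ∈ H, Odd (u.1 + u.2))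
    (hcol : ∀ u ∈ H, ∀ v ∈ H, u.1 + u.2 = v.1 + v.2 → u = v) :
    ∃ M : gridGraph.Subgraph, M.verts ⊆ rowStrip n a b ∧ M.IsMatching ∧
      (∀ u ∈ rowStrip n a b, Even (u.1 + u.2) → u ∈ M.verts) ∧ ∀ u ∈ H, u ∉ M.verts := by
  obtain ⟨M, hM, hMatching⟩ := SimpleGraph.Subgraph.exists_isMatching_of_injOn (partner H ℓ)
    (fun u _ => gridGraph_adj_partner u) (partner_injOn hℓ)
    (Set.disjoint_left.mpr fun u hu ⟨v, hv, hvu⟩ =>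
      Int.not_even_iff_odd.mpr (hvu ▸ odd_partner hv.2) hu.2)
  refine ⟨M, ?_, hMatching, fun u huW hu => hM ▸ Or.inl ⟨huW, hu⟩, fun u huH huM => ?_⟩
  · rw [hM]
    rintro u (hu | ⟨v, hv, rfl⟩)
    · exact hu.1
    · exact partner_mem_rowStrip hℓ hHW ha hv.1 hv.2
  · rw [hM] at huM
    rcases huM with hu | ⟨v, hv, rfl⟩
    · exact Int.not_even_iff_odd.mpr (hHodd u huH) hu.2
    · exact partner_notMem hℓ hcol hv.1 huH

theorem isExitRowAssignment_const {n : ℕ} {a b : ℤ} {H : Set (ℤ × ℤ)}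
    (hHW : H ⊆ rowStrip n a b) (hb : Odd b) : IsExitRowAssignment n a b H fun _ => b where
  odd _ _ := hb
  row_le _ hh := (hHW hh).2.2
  le_top _ _ := le_rfl
  eq_of_exitRow_eq _ _ _ _ _ := by
    rintro ⟨u, hu, hrow⟩
    have := hu.2.2
    omega
  noncrossing _ _ _ _ _ _ := le_rfl

open Finset in
theorem exists_isExitRowAssignment_of_card_le {n : ℕ} {a b : ℤ} {H : Set (ℤ × ℤ)}
    (hHW : H ⊆ rowStrip n a b) (hHodd : ∀ u ∈ H, Odd (u.1 + u.2)) (hb : Even b)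
    (hall : ∀ t : ℕ, (H ∩ {u | b - 2 * (t : ℤ) < u.2 - u.1}).ncard ≤ t) :
    ∃ ℓ, IsExitRowAssignment n a b H ℓ := by
  classical
  lift H to Finset (ℤ × ℤ) using (diamond_finite n).subset (hHW.trans fun u hu => hu.1)
  rw [Int.even_iff] at hb
  -- `k h ≤ d h` says that the exit row `b - 1 - 2 * k h` is not below `h`
  let d (h : ℤ × ℤ) : ℕ := ((b - 1 - (h.2 - h.1)) / 2).toNat
  obtain ⟨k, hk, hkd⟩ := exists_injOn_le_of_card_filter_lt_le H d fun t =>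
    calc #{h ∈ H | d h < t} = (↑{h ∈ H | d h < t} : Set (ℤ × ℤ)).ncard :=
          (Set.ncard_coe_finset _).symm
      _ ≤ (↑H ∩ {u : ℤ × ℤ | b - 2 * (t : ℤ) < u.2 - u.1}).ncard := by
          refine Set.ncard_le_ncard (fun h hh => ?_) (Set.toFinite _)
          rw [coe_filter] at hh
          have := Int.odd_iff.mp (hHodd h hh.1)
          exact ⟨hh.1, by simp only [Set.mem_ofPred_eq, d] at hh ⊢; omega⟩
      _ ≤ t := hall t
  obtain ⟨ℓ, hℓ, hinj, hcross⟩ := exists_uncrossed H (fun h => h.2 - h.1) (fun h => h.1 + h.2)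
    (fun h => b - 1 - 2 * k h) (fun h hh h' hh' e => hk hh hh' (by simp only at e; omega))
    fun h hh => by
      have hkh : k h ≤ d h := hkd h hh
      have := Int.odd_iff.mp (hHodd h hh)
      have := (hHW hh).2.2
      simp only [d] at hkh
      omega
  refine ⟨ℓ, fun h hh => ?_, fun h hh => (hℓ h hh).1, fun h hh => ?_,
    fun h hh h' hh' e _ => hinj hh hh' e, hcross⟩
  · obtain ⟨j, -, hj⟩ := (hℓ h hh).2
    rw [← hj, Int.odd_iff]
    dsimp only
    omega
  · obtain ⟨j, -, hj⟩ := (hℓ h hh).2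
    rw [← hj]
    dsimp only
    omega

theorem rowInterval_matching_all_even_avoiding_general
    (n : ℕ) (a b : ℤ) (ha : Odd a)
    (W : Set (ℤ × ℤ)) (hW : W = {u ∈ diamond n | a ≤ u.2 - u.1 ∧ u.2 - u.1 ≤ b})
    (H : Set (ℤ × ℤ)) (hHW : H ⊆ W)
    (hHodd : ∀ u ∈ H, Odd (u.1 + u.2))
    (hcol : ∀ u ∈ H, ∀ v ∈ H, u.1 + u.2 = v.1 + v.2 → u = v)
    (hcase : Odd b ∨ (Even b ∧ ∀ t : ℕ,
      (H ∩ {u | b - 2 * (t : ℤ) < u.2 - u.1}).ncard ≤ t)) :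
    ∃ M : gridGraph.Subgraph, M.verts ⊆ W ∧ M.IsMatching ∧
      (∀ u ∈ W, Even (u.1 + u.2) → u ∈ M.verts) ∧
      (∀ u ∈ H, u ∉ M.verts) := by
  subst hW
  obtain ⟨ℓ, hℓ⟩ : ∃ ℓ, IsExitRowAssignment n a b H ℓ := by
    rcases hcase with hb | ⟨hb, hall⟩
    · exact ⟨_, isExitRowAssignment_const hHW hb⟩
    · exact exists_isExitRowAssignment_of_card_le hHW hHodd hb hall
  exact exists_matching_of_isExitRowAssignment hℓ ha hHW hHodd hcol

/-- Let `W = ⋃_{j=a}^{b} R_j` be an interval of rows of the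
diamond `D_n` (row index of `u` being `j = u.2 - u.1`), with `a ≤ b` and `a`
odd.  Let `H` be a set of odd vertices of `W` with at most one vertex of `H`
in each column (column index `i = u.1 + u.2`).  Suppose either (i) `b` is odd,
or (ii) `b` is even and for every `t`, the top `t` odd rows of `W` (rows with
index `> b - 2t`) contain at most `t` vertices of `H`.  Then there is a
matching of `W` matching all even vertices of `W` but leaving `H`
unmatched. -/
theorem rowInterval_matching_all_even_avoiding
    (n : ℕ) (hn : 0 < n) (a b : ℤ) (ha : Odd a) (hab : a ≤ b)
    (W : Set (ℤ × ℤ)) (hW : W = {u ∈ diamond n | a ≤ u.2 - u.1 ∧ u.2 - u.1 ≤ b})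
    (H : Set (ℤ × ℤ)) (hHW : H ⊆ W)
    (hHodd : ∀ u ∈ H, Odd (u.1 + u.2))
    (hcol : ∀ u ∈ H, ∀ v ∈ H, u.1 + u.2 = v.1 + v.2 → u = v)
    (hcase : Odd b ∨ (Even b ∧ ∀ t : ℕ,
      (H ∩ {u | b - 2 * (t : ℤ) < u.2 - u.1}).ncard ≤ t)) :
    ∃ M : gridGraph.Subgraph, M.verts ⊆ W ∧ M.IsMatching ∧
      (∀ u ∈ W, Even (u.1 + u.2) → u ∈ M.verts) ∧
      (∀ u ∈ H, u ∉ M.verts) :=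
  rowInterval_matching_all_even_avoiding_general n a b ha W hW H hHW hHodd hcol hcase
end

section
/- On a finite simple bipartite graph, Trap and Vicious Trap have the same outcome from every initial vertex: a player has a winning strategy in Trap from v if and only if he has a winning strategy in Vicious Trap from v. -/
/-!
Trap: players alternately move a token along edges of `G` to previously
unvisited vertices (restricted to an allowed set `A`); a player who cannot
move loses.  The history is a list of visited vertices, newest first.
The first player moves at histories of odd length.
-/

variable {V : Type*}

/-- A move to `w` is legal from history `h` if `w` is adjacent to the current
vertex (the head of `h`), has not been visited, and is allowed. -/
def TrapLegal (G : SimpleGraph V) (A : Set V) (h : List V) (w : V) : Prop :=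
  ∃ c, h.head? = some c ∧ G.Adj c w ∧ w ∉ h ∧ w ∈ A

open Classical in
/-- The evolution of the game when the first player uses strategy `σ` and the
second player uses strategy `τ`, starting from `v`.  If the strategy of the
player to move chooses an illegal move, the history freezes. -/
noncomputable def trapPlay (G : SimpleGraph V) (A : Set V) (σ τ : List V → V) (v : V) :
    ℕ → List V
  | 0 => [v]
  | n + 1 =>
    let h := trapPlay G A σ τ v n
    let w := if h.length % 2 = 1 then σ h else τ h
    if TrapLegal G A h w then w :: h else h

/-- The first player has a winning strategy: a strategy `σ` such that against any
strategy `τ` of the second player, at some point it is the second player's turn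
(the history has even length) and the second player has no legal move to make
(in particular, the move suggested by `τ` is not legal). -/
def TrapFirstWins (G : SimpleGraph V) (A : Set V) (v : V) : Prop :=
  ∃ σ : List V → V, ∀ τ : List V → V, ∃ n : ℕ,
    (trapPlay G A σ τ v n).length % 2 = 0 ∧
    ¬ TrapLegal G A (trapPlay G A σ τ v n) (τ (trapPlay G A σ τ v n))

/-- The second player has a winning strategy: a strategy `τ` such that against
any strategy `σ` of the first player, at some point it is the first player's
turn (the history has odd length) and the first player has no legal move. -/
def TrapSecondWins (G : SimpleGraph V) (A : Set V) (v : V) : Prop :=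
  ∃ τ : List V → V, ∀ σ : List V → V, ∃ n : ℕ,
    (trapPlay G A σ τ v n).length % 2 = 1 ∧
    ¬ TrapLegal G A (trapPlay G A σ τ v n) (σ (trapPlay G A σ τ v n))

/-- A move to `w` is legal from history `h` with deleted set `D` if `w` is
adjacent to the current vertex, unvisited and undeleted. -/
def VTrapLegal (G : SimpleGraph V) (h : List V) (D : Set V) (w : V) : Prop :=
  ∃ c, h.head? = some c ∧ G.Adj c w ∧ w ∉ h ∧ w ∉ D

open Classical in
/-- The evolution of Vicious Trap: a strategy chooses, from the current state,
a vertex to move to together with a set of vertices to delete; only the legal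
part of the deletion request (alternative legal moves, other than the chosen
vertex) is executed.  If the chosen move is illegal the state freezes. -/
noncomputable def vtrapPlay (G : SimpleGraph V) (σ τ : List V → Set V → V × Set V) (v : V) :
    ℕ → List V × Set V
  | 0 => ([v], ∅)
  | n + 1 =>
    let s := vtrapPlay G σ τ v n
    let m := if s.1.length % 2 = 1 then σ s.1 s.2 else τ s.1 s.2
    if VTrapLegal G s.1 s.2 m.1 then
      (m.1 :: s.1, s.2 ∪ (m.2 ∩ {x | VTrapLegal G s.1 s.2 x ∧ x ≠ m.1}))
    else s

/-- The first player has a winning strategy in Vicious Trap. -/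
def VTrapFirstWins (G : SimpleGraph V) (v : V) : Prop :=
  ∃ σ, ∀ τ, ∃ n : ℕ,
    (vtrapPlay G σ τ v n).1.length % 2 = 0 ∧
    ¬ VTrapLegal G (vtrapPlay G σ τ v n).1 (vtrapPlay G σ τ v n).2
      ((τ (vtrapPlay G σ τ v n).1 (vtrapPlay G σ τ v n).2).1)

/-- The second player has a winning strategy in Vicious Trap. -/
def VTrapSecondWins (G : SimpleGraph V) (v : V) : Prop :=
  ∃ τ, ∀ σ, ∃ n : ℕ,
    (vtrapPlay G σ τ v n).1.length % 2 = 1 ∧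
    ¬ VTrapLegal G (vtrapPlay G σ τ v n).1 (vtrapPlay G σ τ v n).2
      ((σ (vtrapPlay G σ τ v n).1 (vtrapPlay G σ τ v n).2).1)


/-! Auxiliary development for the proof -/


open Classical in
lemma trapPlay_succ (G : SimpleGraph V) (A : Set V) (σ τ : List V → V) (v : V) (n : ℕ) :
    trapPlay G A σ τ v (n + 1) =
      (let h := trapPlay G A σ τ v n
       let w := if h.length % 2 = 1 then σ h else τ h
       if TrapLegal G A h w then w :: h else h) := rfl

open Classical in
lemma vtrapPlay_succ (G : SimpleGraph V) (σ τ : List V → Set V → V × Set V) (v : V) (n : ℕ) :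
    vtrapPlay G σ τ v (n + 1) =
      (let s := vtrapPlay G σ τ v n
       let m := if s.1.length % 2 = 1 then σ s.1 s.2 else τ s.1 s.2
       if VTrapLegal G s.1 s.2 m.1 then
         (m.1 :: s.1, s.2 ∪ (m.2 ∩ {x | VTrapLegal G s.1 s.2 x ∧ x ≠ m.1}))
       else s) := rfl

lemma vtl_tl {G : SimpleGraph V} {h : List V} {D : Set V} {w : V}
    (hv : VTrapLegal G h D w) : TrapLegal G Set.univ h w := by
  obtain ⟨c, hc, ha, hm, _⟩ := hv
  exact ⟨c, hc, ha, hm, trivial⟩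

lemma not_tl_head {G : SimpleGraph V} {A : Set V} {h : List V} (hne : h ≠ []) (v : V) :
    ¬ TrapLegal G A h (h.head?.getD v) := by
  rintro ⟨c, hc, ha, hm, -⟩
  rw [List.head?_eq_head hne] at hm
  exact hm (List.head_mem hne)

lemma fin2_flip : ∀ x : Fin 2, x + 1 + 1 = x := by decide
lemma fin2_ne_add : ∀ x : Fin 2, x ≠ x + 1 := by decide
lemma fin2_of_ne : ∀ x y : Fin 2, x ≠ y → y = x + 1 := by decide

-- Tracker for deletions performed by the first (odd-turn) player,
-- assuming the other player never deletes.
open Classical in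
noncomputable def delTrackA (G : SimpleGraph V) (σ' : List V → Set V → V × Set V) :
    List V → Set V
  | [] => ∅
  | _ :: h =>
    let D := delTrackA G σ' h
    if h.length % 2 = 1 then
      D ∪ ((σ' h D).2 ∩ {x | VTrapLegal G h D x ∧ x ≠ (σ' h D).1})
    else D

-- Tracker for deletions performed by the second (even-turn) player.
open Classical in
noncomputable def delTrackB (G : SimpleGraph V) (τ' : List V → Set V → V × Set V) :
    List V → Set V
  | [] => ∅
  | _ :: h =>
    let D := delTrackB G τ' h
    if h.length % 2 = 1 then D
    else D ∪ ((τ' h D).2 ∩ {x | VTrapLegal G h D x ∧ x ≠ (τ' h D).1})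

open Classical in
noncomputable def liftA (G : SimpleGraph V) (σ' : List V → Set V → V × Set V) (v : V) :
    List V → V := fun h =>
  if VTrapLegal G h (delTrackA G σ' h) (σ' h (delTrackA G σ' h)).1
  then (σ' h (delTrackA G σ' h)).1 else h.head?.getD v

open Classical in
noncomputable def liftB (G : SimpleGraph V) (τ' : List V → Set V → V × Set V) (v : V) :
    List V → V := fun h =>
  if VTrapLegal G h (delTrackB G τ' h) (τ' h (delTrackB G τ' h)).1
  then (τ' h (delTrackB G τ' h)).1 else h.head?.getD v

lemma lockstepA (G : SimpleGraph V) (C : G.Coloring (Fin 2)) (v : V)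
    (σ' : List V → Set V → V × Set V) (τ : List V → V) (n : ℕ) :
    (vtrapPlay G σ' (fun h _ => (τ h, ∅)) v n).1
        = trapPlay G Set.univ (liftA G σ' v) τ v n ∧
    (vtrapPlay G σ' (fun h _ => (τ h, ∅)) v n).2
        = delTrackA G σ' (trapPlay G Set.univ (liftA G σ' v) τ v n) ∧
    trapPlay G Set.univ (liftA G σ' v) τ v n ≠ [] ∧
    (∀ c, (trapPlay G Set.univ (liftA G σ' v) τ v n).head? = some c →
      ((trapPlay G Set.univ (liftA G σ' v) τ v n).length % 2 = 1 → C c = C v) ∧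
      ((trapPlay G Set.univ (liftA G σ' v) τ v n).length % 2 = 0 → C c = C v + 1)) ∧
    (∀ x ∈ delTrackA G σ' (trapPlay G Set.univ (liftA G σ' v) τ v n), C x = C v + 1) := by
  induction n with
  | zero =>
    refine ⟨rfl, ?_, by simp [trapPlay], ?_, ?_⟩
    · show (∅ : Set V) = delTrackA G σ' [v]
      simp [delTrackA]
    · intro c hc
      simp only [trapPlay, List.head?_cons, Option.some.injEq] at hc
      subst hc
      exact ⟨fun _ => rfl, by simp [trapPlay]⟩
    · show ∀ x ∈ delTrackA G σ' [v], C x = C v + 1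
      simp [delTrackA]
  | succ n ih =>
    obtain ⟨h1, h2, hne, hcol, hD⟩ := ih
    set h := trapPlay G Set.univ (liftA G σ' v) τ v n with hhdef
    have hstate : vtrapPlay G σ' (fun h _ => (τ h, ∅)) v n = (h, delTrackA G σ' h) := by
      rw [← h2, ← h1]
    rw [trapPlay_succ, vtrapPlay_succ, hstate, ← hhdef]
    dsimp only
    rcases Nat.mod_two_eq_zero_or_one h.length with hpar | hpar
    · -- even length: second player's (τ's) turn
      have hodd : ¬ h.length % 2 = 1 := by omega
      rw [if_neg hodd, if_neg hodd]
      dsimp only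
      by_cases hTL : TrapLegal G Set.univ h (τ h)
      · obtain ⟨c, hc, hadj, hmem, -⟩ := hTL
        have hcc : C c = C v + 1 := (hcol c hc).2 hpar
        have hw : C (τ h) = C v := by
          rw [fin2_of_ne _ _ (C.valid hadj), hcc, fin2_flip]
        have hwD : τ h ∉ delTrackA G σ' h := fun hx =>
          fin2_ne_add (C v) (hw.symm.trans (hD _ hx))
        have hVL : VTrapLegal G h (delTrackA G σ' h) (τ h) := ⟨c, hc, hadj, hmem, hwD⟩
        rw [if_pos hVL, if_pos ⟨c, hc, hadj, hmem, trivial⟩]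
        have hDnew : delTrackA G σ' (τ h :: h) = delTrackA G σ' h := by
          simp only [delTrackA, if_neg hodd]
        refine ⟨rfl, ?_, by simp, ?_, ?_⟩
        · show delTrackA G σ' h ∪ (∅ ∩ _) = delTrackA G σ' (τ h :: h)
          rw [hDnew]
          simp
        · intro c' hc'
          simp only [List.head?_cons, Option.some.injEq] at hc'
          subst hc'
          refine ⟨fun _ => hw, fun habs => ?_⟩
          simp only [List.length_cons] at habs; omega
        · rw [hDnew]; exact hD
      · have hVL : ¬ VTrapLegal G h (delTrackA G σ' h) (τ h) := fun hv => hTL (vtl_tl hv)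
        rw [if_neg hVL, if_neg hTL]
        exact ⟨rfl, rfl, hne, hcol, hD⟩
    · -- odd length: first player's turn
      rw [if_pos hpar, if_pos hpar]
      by_cases hVL : VTrapLegal G h (delTrackA G σ' h) ((σ' h (delTrackA G σ' h)).1)
      · have hlift : liftA G σ' v h = (σ' h (delTrackA G σ' h)).1 := by
          rw [liftA]
          exact if_pos hVL
        obtain ⟨c, hc, hadj, hmem, hnD⟩ := hVL
        have hcc : C c = C v := (hcol c hc).1 hpar
        have hVL' : VTrapLegal G h (delTrackA G σ' h) ((σ' h (delTrackA G σ' h)).1) :=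
          ⟨c, hc, hadj, hmem, hnD⟩
        rw [hlift, if_pos hVL', if_pos (vtl_tl hVL')]
        have hDnew : delTrackA G σ' ((σ' h (delTrackA G σ' h)).1 :: h)
            = delTrackA G σ' h ∪ ((σ' h (delTrackA G σ' h)).2 ∩
                {x | VTrapLegal G h (delTrackA G σ' h) x ∧ x ≠ (σ' h (delTrackA G σ' h)).1}) := by
          simp only [delTrackA, if_pos hpar]
        refine ⟨rfl, hDnew.symm, by simp, ?_, ?_⟩
        · intro c' hc'
          simp only [List.head?_cons, Option.some.injEq] at hc'
          subst hc'
          refine ⟨fun habs => ?_, fun _ => ?_⟩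
          · simp only [List.length_cons] at habs; omega
          · rw [fin2_of_ne _ _ (C.valid hadj), hcc]
        · rw [hDnew]
          rintro x (hx | ⟨-, ⟨c', hc', hadj', -, -⟩, -⟩)
          · exact hD x hx
          · rw [hc] at hc'
            cases hc'
            rw [fin2_of_ne _ _ (C.valid hadj'), hcc]
      · have hlift : liftA G σ' v h = h.head?.getD v := by
          rw [liftA]
          exact if_neg hVL
        have hTL : ¬ TrapLegal G Set.univ h (liftA G σ' v h) := by
          rw [hlift]; exact not_tl_head hne v
        rw [if_neg hVL, if_neg hTL]
        exact ⟨rfl, rfl, hne, hcol, hD⟩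

lemma lockstepB (G : SimpleGraph V) (C : G.Coloring (Fin 2)) (v : V)
    (τ' : List V → Set V → V × Set V) (σ : List V → V) (n : ℕ) :
    (vtrapPlay G (fun h _ => (σ h, ∅)) τ' v n).1
        = trapPlay G Set.univ σ (liftB G τ' v) v n ∧
    (vtrapPlay G (fun h _ => (σ h, ∅)) τ' v n).2
        = delTrackB G τ' (trapPlay G Set.univ σ (liftB G τ' v) v n) ∧
    trapPlay G Set.univ σ (liftB G τ' v) v n ≠ [] ∧
    (∀ c, (trapPlay G Set.univ σ (liftB G τ' v) v n).head? = some c →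
      ((trapPlay G Set.univ σ (liftB G τ' v) v n).length % 2 = 1 → C c = C v) ∧
      ((trapPlay G Set.univ σ (liftB G τ' v) v n).length % 2 = 0 → C c = C v + 1)) ∧
    (∀ x ∈ delTrackB G τ' (trapPlay G Set.univ σ (liftB G τ' v) v n), C x = C v) := by
  induction n with
  | zero =>
    refine ⟨rfl, ?_, by simp [trapPlay], ?_, ?_⟩
    · show (∅ : Set V) = delTrackB G τ' [v]
      symm
      simp only [delTrackB, List.length_nil]
      rw [if_neg (by omega)]
      ext x
      simp only [Set.mem_empty_iff_false, Set.mem_union, Set.mem_inter_iff,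
        Set.mem_setOf_eq, iff_false]
      rintro (hx | ⟨-, ⟨c, hc, -⟩, -⟩)
      · exact hx
      · simp at hc
    · intro c hc
      simp only [trapPlay, List.head?_cons, Option.some.injEq] at hc
      subst hc
      exact ⟨fun _ => rfl, by simp [trapPlay]⟩
    · show ∀ x ∈ delTrackB G τ' [v], C x = C v
      simp only [delTrackB, List.length_nil]
      rw [if_neg (by omega)]
      rintro x (hx | ⟨-, ⟨c, hc, -⟩, -⟩)
      · exact hx.elim
      · simp at hc
  | succ n ih =>
    obtain ⟨h1, h2, hne, hcol, hD⟩ := ih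
    set h := trapPlay G Set.univ σ (liftB G τ' v) v n with hhdef
    have hstate : vtrapPlay G (fun h _ => (σ h, ∅)) τ' v n = (h, delTrackB G τ' h) := by
      rw [← h2, ← h1]
    rw [trapPlay_succ, vtrapPlay_succ, hstate, ← hhdef]
    dsimp only
    rcases Nat.mod_two_eq_zero_or_one h.length with hpar | hpar
    · -- even length: second player's turn, protagonist τ'
      have hodd : ¬ h.length % 2 = 1 := by omega
      rw [if_neg hodd, if_neg hodd]
      by_cases hVL : VTrapLegal G h (delTrackB G τ' h) ((τ' h (delTrackB G τ' h)).1)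
      · have hlift : liftB G τ' v h = (τ' h (delTrackB G τ' h)).1 := by
          rw [liftB]
          exact if_pos hVL
        obtain ⟨c, hc, hadj, hmem, hnD⟩ := hVL
        have hcc : C c = C v + 1 := (hcol c hc).2 hpar
        have hVL' : VTrapLegal G h (delTrackB G τ' h) ((τ' h (delTrackB G τ' h)).1) :=
          ⟨c, hc, hadj, hmem, hnD⟩
        rw [hlift, if_pos hVL', if_pos (vtl_tl hVL')]
        have hDnew : delTrackB G τ' ((τ' h (delTrackB G τ' h)).1 :: h)
            = delTrackB G τ' h ∪ ((τ' h (delTrackB G τ' h)).2 ∩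
                {x | VTrapLegal G h (delTrackB G τ' h) x ∧ x ≠ (τ' h (delTrackB G τ' h)).1}) := by
          simp only [delTrackB, if_neg hodd]
        refine ⟨rfl, hDnew.symm, by simp, ?_, ?_⟩
        · intro c' hc'
          simp only [List.head?_cons, Option.some.injEq] at hc'
          subst hc'
          refine ⟨fun _ => ?_, fun habs => ?_⟩
          · rw [fin2_of_ne _ _ (C.valid hadj), hcc, fin2_flip]
          · simp only [List.length_cons] at habs; omega
        · rw [hDnew]
          rintro x (hx | ⟨-, ⟨c', hc', hadj', -, -⟩, -⟩)
          · exact hD x hx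
          · rw [hc] at hc'
            cases hc'
            rw [fin2_of_ne _ _ (C.valid hadj'), hcc, fin2_flip]
      · have hlift : liftB G τ' v h = h.head?.getD v := by
          rw [liftB]
          exact if_neg hVL
        have hTL : ¬ TrapLegal G Set.univ h (liftB G τ' v h) := by
          rw [hlift]; exact not_tl_head hne v
        rw [if_neg hVL, if_neg hTL]
        exact ⟨rfl, rfl, hne, hcol, hD⟩
    · -- odd length: first player's (σ's) turn
      rw [if_pos hpar, if_pos hpar]
      dsimp only
      by_cases hTL : TrapLegal G Set.univ h (σ h)
      · obtain ⟨c, hc, hadj, hmem, -⟩ := hTL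
        have hcc : C c = C v := (hcol c hc).1 hpar
        have hw : C (σ h) = C v + 1 := by
          rw [fin2_of_ne _ _ (C.valid hadj), hcc]
        have hwD : σ h ∉ delTrackB G τ' h := fun hx =>
          fin2_ne_add (C v) ((hD _ hx).symm.trans hw)
        have hVL : VTrapLegal G h (delTrackB G τ' h) (σ h) := ⟨c, hc, hadj, hmem, hwD⟩
        rw [if_pos hVL, if_pos ⟨c, hc, hadj, hmem, trivial⟩]
        have hDnew : delTrackB G τ' (σ h :: h) = delTrackB G τ' h := by
          simp only [delTrackB, if_pos hpar]
        refine ⟨rfl, ?_, by simp, ?_, ?_⟩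
        · show delTrackB G τ' h ∪ (∅ ∩ _) = delTrackB G τ' (σ h :: h)
          rw [hDnew]
          simp
        · intro c' hc'
          simp only [List.head?_cons, Option.some.injEq] at hc'
          subst hc'
          refine ⟨fun habs => ?_, fun _ => hw⟩
          simp only [List.length_cons] at habs; omega
        · rw [hDnew]; exact hD
      · have hVL : ¬ VTrapLegal G h (delTrackB G τ' h) (σ h) := fun hv => hTL (vtl_tl hv)
        rw [if_neg hVL, if_neg hTL]
        exact ⟨rfl, rfl, hne, hcol, hD⟩

/-- On a finite simple bipartite graph, Trap and Vicious Trap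
have the same outcome from every initial vertex: a player has a winning
strategy in Trap from `v` if and only if he has one in Vicious Trap from `v`. -/
theorem trap_eq_vtrap_on_bipartite [Fintype V] (G : SimpleGraph V)
    (hbip : G.Colorable 2) (v : V) :
    (TrapFirstWins G Set.univ v ↔ VTrapFirstWins G v) ∧
    (TrapSecondWins G Set.univ v ↔ VTrapSecondWins G v) := by
  obtain ⟨C⟩ := hbip
  constructor
  · constructor
    · -- Trap first wins → VTrap first wins
      rintro ⟨σ, hσ⟩
      refine ⟨fun h _ => (σ h, ∅), fun τ' => ?_⟩
      obtain ⟨n, hev, hnl⟩ := hσ (liftB G τ' v)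
      obtain ⟨h1, h2, hne, hcol, hD⟩ := lockstepB G C v τ' σ n
      set h := trapPlay G Set.univ σ (liftB G τ' v) v n with hhdef
      refine ⟨n, by rw [h1]; exact hev, ?_⟩
      rw [h1, h2]
      intro hv
      apply hnl
      have hlift : liftB G τ' v h = (τ' h (delTrackB G τ' h)).1 := by
        rw [liftB]; exact if_pos hv
      rw [hlift]
      exact vtl_tl hv
    · -- VTrap first wins → Trap first wins
      rintro ⟨σ', hσ'⟩
      refine ⟨liftA G σ' v, fun τ => ?_⟩
      obtain ⟨n, hev, hnl⟩ := hσ' (fun h _ => (τ h, ∅))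
      obtain ⟨h1, h2, hne, hcol, hD⟩ := lockstepA G C v σ' τ n
      set h := trapPlay G Set.univ (liftA G σ' v) τ v n with hhdef
      rw [h1] at hev
      refine ⟨n, hev, ?_⟩
      intro hTL
      obtain ⟨c, hc, hadj, hmem, -⟩ := hTL
      have hcc : C c = C v + 1 := (hcol c hc).2 hev
      have hw : C (τ h) = C v := by
        rw [fin2_of_ne _ _ (C.valid hadj), hcc, fin2_flip]
      have hwD : τ h ∉ delTrackA G σ' h := fun hx =>
        fin2_ne_add (C v) (hw.symm.trans (hD _ hx))
      exact hnl (by rw [h1, h2]; exact ⟨c, hc, hadj, hmem, hwD⟩)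
  · constructor
    · -- Trap second wins → VTrap second wins
      rintro ⟨τ, hτ⟩
      refine ⟨fun h _ => (τ h, ∅), fun σ' => ?_⟩
      obtain ⟨n, hodd, hnl⟩ := hτ (liftA G σ' v)
      obtain ⟨h1, h2, hne, hcol, hD⟩ := lockstepA G C v σ' τ n
      set h := trapPlay G Set.univ (liftA G σ' v) τ v n with hhdef
      refine ⟨n, by rw [h1]; exact hodd, ?_⟩
      rw [h1, h2]
      intro hv
      apply hnl
      have hlift : liftA G σ' v h = (σ' h (delTrackA G σ' h)).1 := by
        rw [liftA]; exact if_pos hv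
      rw [hlift]
      exact vtl_tl hv
    · -- VTrap second wins → Trap second wins
      rintro ⟨τ', hτ'⟩
      refine ⟨liftB G τ' v, fun σ => ?_⟩
      obtain ⟨n, hodd, hnl⟩ := hτ' (fun h _ => (σ h, ∅))
      obtain ⟨h1, h2, hne, hcol, hD⟩ := lockstepB G C v τ' σ n
      set h := trapPlay G Set.univ σ (liftB G τ' v) v n with hhdef
      rw [h1] at hodd
      refine ⟨n, hodd, ?_⟩
      intro hTL
      obtain ⟨c, hc, hadj, hmem, -⟩ := hTL
      have hcc : C c = C v := (hcol c hc).1 hodd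
      have hw : C (σ h) = C v + 1 := by
        rw [fin2_of_ne _ _ (C.valid hadj), hcc]
      have hwD : σ h ∉ delTrackB G τ' h := fun hx =>
        fin2_ne_add (C v) ((hD _ hx).symm.trans hw)
      exact hnl (by rw [h1, h2]; exact ⟨c, hc, hadj, hmem, hwD⟩)
end
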